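/- arXiv:math/0404123 — 3 statements merged into one kernel-verified Lean document; each statement's English description precedes it below -/
import Mathlib

section
/- For n ≥ 1, the de Rham cohomology groups H^i(Ω^⋆_n) of ℤ[x₁,…,x_m] in total degree n are finite abelian groups. -/
open MvPolynomial

/-- A differential form on the affine `m`-space over `R`: a family of polynomial
coefficients indexed by the subsets `s` of the variables (the coefficient of `dx_s`). -/
abbrev Omega (m : ℕ) (R : Type) [CommRing R] : Type :=
  Finset (Fin m) → MvPolynomial (Fin m) R

/-- The de Rham differential. -/
noncomputable def dRham (m : ℕ) (R : Type) [CommRing R] : Omega m R →ₗ[R] Omega m R where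
  toFun ω s := ∑ j ∈ s, (-1 : MvPolynomial (Fin m) R) ^ ((s.filter (· < j)).card) *
      pderiv j (ω (s.erase j))
  map_add' ω η := by
    funext s
    simp [Finset.sum_add_distrib, mul_add]
  map_smul' c ω := by
    funext s
    simp [Finset.smul_sum, mul_smul_comm]

/-- The Koszul contraction: the `R[x]`-linear antiderivation with `κ (dx_j) = x_j`. -/
noncomputable def koszul (m : ℕ) (R : Type) [CommRing R] : Omega m R →ₗ[R] Omega m R where
  toFun ω s := ∑ j ∈ sᶜ, (-1 : MvPolynomial (Fin m) R) ^ ((s.filter (· < j)).card) *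
      (X j * ω (insert j s))
  map_add' ω η := by
    funext s
    simp [Finset.sum_add_distrib, mul_add]
  map_smul' c ω := by
    funext s
    simp [Finset.smul_sum, mul_smul_comm]

/-- Forms of cohomological degree `i` and total degree `n`:
supported on `i`-element subsets, with homogeneous coefficients of degree `n - i`
(and `0` if `i > n`): this is `Sⁿ⁻ⁱ ⊗ Λⁱ`. -/
noncomputable def homog (m n i : ℕ) (R : Type) [CommRing R] : Submodule R (Omega m R) :=
  Submodule.pi Set.univ fun s : Finset (Fin m) =>
    if s.card = i ∧ i ≤ n then homogeneousSubmodule (Fin m) R (n - i) else ⊥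

/-- de Rham cocycles of cohomological degree `i`, total degree `n`. -/
noncomputable def cocycles (m n i : ℕ) (R : Type) [CommRing R] : Submodule R (Omega m R) :=
  homog m n i R ⊓ LinearMap.ker (dRham m R)

/-- de Rham coboundaries of cohomological degree `i`, total degree `n`. -/
noncomputable def cobdry (m n i : ℕ) (R : Type) [CommRing R] : Submodule R (Omega m R) :=
  match i with
  | 0 => ⊥
  | i + 1 => (homog m n i R).map (dRham m R)

/-- The de Rham cohomology `Hⁱ(Ω⋆_n)` in cohomological degree `i` and total degree `n`. -/
abbrev DRH (m n i : ℕ) (R : Type) [CommRing R] : Type :=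
  cocycles m n i R ⧸ ((cobdry m n i R).comap (cocycles m n i R).subtype)

/-- The Frobenius `x_j ↦ x_jᵖ`, `dx_j ↦ p x_jᵖ⁻¹ dx_j`. -/
noncomputable def frob (m p : ℕ) (R : Type) [CommRing R] : Omega m R →ₗ[R] Omega m R where
  toFun ω s := (∏ j ∈ s, ((p : MvPolynomial (Fin m) R) * X j ^ (p - 1))) *
      bind₁ (fun j => (X j : MvPolynomial (Fin m) R) ^ p) (ω s)
  map_add' ω η := by
    funext s
    simp [mul_add]
  map_smul' c ω := by
    funext s
    simp [mul_smul_comm]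

/-- The inverse Cartier operator `x_j ↦ x_jᵖ`, `dx_j ↦ x_jᵖ⁻¹ dx_j` mod `p`. -/
noncomputable def cartierInv (m p : ℕ) : Omega m (ZMod p) →ₗ[ZMod p] Omega m (ZMod p) where
  toFun ω s := (∏ j ∈ s, (X j : MvPolynomial (Fin m) (ZMod p)) ^ (p - 1)) *
      bind₁ (fun j => (X j : MvPolynomial (Fin m) (ZMod p)) ^ p) (ω s)
  map_add' ω η := by
    funext s
    simp [mul_add]
  map_smul' c ω := by
    funext s
    simp [mul_smul_comm]

/-- Reduction of integral forms modulo `p`. -/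
noncomputable def redp (m p : ℕ) (ω : Omega m ℤ) : Omega m (ZMod p) :=
  fun s => MvPolynomial.map (Int.castRingHom (ZMod p)) (ω s)

/-- The `p`-primary component of an abelian group. -/
def pPrim (p : ℕ) (M : Type*) [AddCommGroup M] : AddSubgroup M where
  carrier := {x | ∃ k : ℕ, p ^ k • x = 0}
  zero_mem' := ⟨0, by simp⟩
  add_mem' := by
    rintro a b ⟨k, hk⟩ ⟨l, hl⟩
    refine ⟨k + l, ?_⟩
    have ha : p ^ (k + l) • a = 0 := by rw [pow_add, mul_comm, mul_smul, hk, smul_zero]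
    have hb : p ^ (k + l) • b = 0 := by rw [pow_add, mul_smul, hl, smul_zero]
    rw [smul_add, ha, hb, add_zero]
  neg_mem' := by
    rintro a ⟨k, hk⟩
    exact ⟨k, by rw [smul_neg, hk, neg_zero]⟩


open Finset

lemma dRham_apply {m : ℕ} (ω : Omega m ℤ) (s : Finset (Fin m)) :
    dRham m ℤ ω s = ∑ j ∈ s, (-1 : MvPolynomial (Fin m) ℤ) ^ ((s.filter (· < j)).card) *
      pderiv j (ω (s.erase j)) := rfl

lemma koszul_apply {m : ℕ} (ω : Omega m ℤ) (s : Finset (Fin m)) :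
    koszul m ℤ ω s = ∑ j ∈ sᶜ, (-1 : MvPolynomial (Fin m) ℤ) ^ ((s.filter (· < j)).card) *
      (X j * ω (insert j s)) := rfl

lemma compl_erase' {m : ℕ} (s : Finset (Fin m)) (j : Fin m) :
    (s.erase j)ᶜ = insert j sᶜ := by
  ext x; by_cases h : x = j <;> simp [h]

lemma sign_cancel {m : ℕ} {s : Finset (Fin m)} {j k : Fin m} (hj : j ∈ s) (hk : k ∉ s) :
    (-1:ℤ)^((s.filter (· < j)).card) * (-1:ℤ)^(((s.erase j).filter (· < k)).card)
      + (-1:ℤ)^((s.filter (· < k)).card) * (-1:ℤ)^(((insert k s).filter (· < j)).card) = 0 := by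
  classical
  have hjk : j ≠ k := fun h => hk (h ▸ hj)
  rw [filter_erase, filter_insert]
  rcases hjk.lt_or_gt with h | h
  · rw [if_neg (asymm h)]
    have hjf : j ∈ s.filter (· < k) := mem_filter.mpr ⟨hj, h⟩
    have : s.filter (· < k) = insert j ((s.filter (· < k)).erase j) := (insert_erase hjf).symm
    rw [this, card_insert_of_notMem (notMem_erase _ _), erase_insert (notMem_erase _ _),
      pow_succ]
    ring
  · rw [if_pos h, erase_eq_of_notMem (by simp [asymm h]),
      card_insert_of_notMem (fun hc => hk (mem_filter.mp hc).1), pow_succ]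
    ring

lemma sign_cancel' {m : ℕ} {s : Finset (Fin m)} {j k : Fin m} (hj : j ∈ s) (hk : k ∉ s) :
    (-1:MvPolynomial (Fin m) ℤ)^((s.filter (· < j)).card)
        * (-1)^(((s.erase j).filter (· < k)).card)
      + (-1)^((s.filter (· < k)).card) * (-1)^(((insert k s).filter (· < j)).card) = 0 := by
  have := congrArg (C : ℤ → MvPolynomial (Fin m) ℤ) (sign_cancel hj hk)
  simpa using this

section

variable {m : ℕ}

lemma pderiv_sign_mul (j : Fin m) (c : ℕ) (f : MvPolynomial (Fin m) ℤ) :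
    pderiv j ((-1:MvPolynomial (Fin m) ℤ)^c * f) = (-1)^c * pderiv j f := by
  have h : ((-1:MvPolynomial (Fin m) ℤ)^c) = C ((-1:ℤ)^c) := by simp
  rw [h, pderiv_C_mul]

lemma neg_one_pow_sq (c : ℕ) (f : MvPolynomial (Fin m) ℤ) :
    (-1:MvPolynomial (Fin m) ℤ)^c * ((-1)^c * f) = f := by
  rw [← mul_assoc, ← pow_add, Even.neg_one_pow ⟨c, rfl⟩, one_mul]

end

lemma X_mul_pderiv_monomial {m : ℕ} (j : Fin m) (v : Fin m →₀ ℕ) (a : ℤ) :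
    X j * pderiv j (monomial v a) = (v j) • monomial v a := by
  rw [pderiv_monomial]
  by_cases h : v j = 0
  · simp [h]
  · rw [X, monomial_mul, smul_monomial]
    rw [add_tsub_cancel_of_le (Finsupp.single_le_iff.mpr (Nat.one_le_iff_ne_zero.mpr h))]
    congr 1
    push_cast
    ring

lemma euler {m : ℕ} (d : ℕ) (φ : MvPolynomial (Fin m) ℤ) (hφ : φ.IsHomogeneous d) :
    ∑ j : Fin m, X j * pderiv j φ = d • φ := by
  conv_lhs => rw [φ.as_sum]
  simp only [map_sum, Finset.mul_sum, X_mul_pderiv_monomial]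
  rw [Finset.sum_comm]
  conv_rhs => rw [φ.as_sum, Finset.smul_sum]
  refine Finset.sum_congr rfl fun v hv => ?_
  rw [← Finset.sum_smul]
  congr 1
  have := hφ (mem_support_iff.mp hv)
  rw [← this]
  simp [Finsupp.weight, Finsupp.linearCombination, Finsupp.sum_fintype]

lemma homotopy {m n i : ℕ} (hi : i ≤ n) (ω : Omega m ℤ)
    (hhom : ∀ t, (ω t).IsHomogeneous (n - i))
    (hcard : ∀ t, t.card ≠ i → ω t = 0) (s : Finset (Fin m)) :
    dRham m ℤ (koszul m ℤ ω) s + koszul m ℤ (dRham m ℤ ω) s = n • ω s := by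
  classical
  have hA : dRham m ℤ (koszul m ℤ ω) s
      = (∑ j ∈ s, pderiv j (X j * ω s))
        + ∑ j ∈ s, ∑ k ∈ sᶜ,
            ((-1:MvPolynomial (Fin m) ℤ)^((s.filter (· < j)).card)
              * (-1)^(((s.erase j).filter (· < k)).card))
            * (X k * pderiv j (ω (insert k (s.erase j)))) := by
    rw [dRham_apply, ← sum_add_distrib]
    refine sum_congr rfl fun j hj => ?_
    rw [koszul_apply, compl_erase', sum_insert (by simp [hj] : j ∉ sᶜ)]
    have e1 : ((s.erase j).filter (· < j)).card = (s.filter (· < j)).card := by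
      rw [filter_erase, erase_eq_of_notMem (by simp)]
    rw [map_add, mul_add]
    congr 1
    · rw [insert_erase hj, e1, pderiv_sign_mul, neg_one_pow_sq]
    · rw [map_sum, mul_sum]
      refine sum_congr rfl fun k hk => ?_
      have hkj : k ≠ j := by rintro rfl; simp [hj] at hk
      rw [pderiv_sign_mul, pderiv_mul, pderiv_X_of_ne hkj, zero_mul, zero_add]
      ring
  have hB : koszul m ℤ (dRham m ℤ ω) s
      = (∑ k ∈ sᶜ, X k * pderiv k (ω s))
        + ∑ k ∈ sᶜ, ∑ j ∈ s,
            ((-1:MvPolynomial (Fin m) ℤ)^((s.filter (· < k)).card)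
              * (-1)^(((insert k s).filter (· < j)).card))
            * (X k * pderiv j (ω ((insert k s).erase j))) := by
    rw [koszul_apply, ← sum_add_distrib]
    refine sum_congr rfl fun k hk => ?_
    have hks : k ∉ s := by simpa using hk
    rw [dRham_apply, sum_insert hks, erase_insert hks]
    have e2 : ((insert k s).filter (· < k)).card = (s.filter (· < k)).card := by
      rw [filter_insert, if_neg (lt_irrefl k)]
    rw [e2]
    have sq : (-1:MvPolynomial (Fin m) ℤ)^((s.filter (· < k)).card)
        * (-1)^((s.filter (· < k)).card) = 1 := by
      rw [← pow_add, Even.neg_one_pow ⟨_, rfl⟩]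
    have step : ∀ g S : MvPolynomial (Fin m) ℤ,
        (-1:MvPolynomial (Fin m) ℤ)^((s.filter (· < k)).card)
          * (X k * ((-1)^((s.filter (· < k)).card) * g + S))
        = X k * g + (-1)^((s.filter (· < k)).card) * (X k * S) := fun g S => by
      linear_combination (X k * g) * sq
    rw [step]
    congr 1
    rw [mul_sum, mul_sum]
    exact sum_congr rfl fun j hj => by ring
  have hC : (∑ j ∈ s, ∑ k ∈ sᶜ,
            ((-1:MvPolynomial (Fin m) ℤ)^((s.filter (· < j)).card)
              * (-1)^(((s.erase j).filter (· < k)).card))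
            * (X k * pderiv j (ω (insert k (s.erase j)))))
      + (∑ k ∈ sᶜ, ∑ j ∈ s,
            ((-1:MvPolynomial (Fin m) ℤ)^((s.filter (· < k)).card)
              * (-1)^(((insert k s).filter (· < j)).card))
            * (X k * pderiv j (ω ((insert k s).erase j)))) = 0 := by
    rw [Finset.sum_comm (s := sᶜ) (t := s), ← sum_add_distrib]
    refine sum_eq_zero fun j hj => ?_
    rw [← sum_add_distrib]
    refine sum_eq_zero fun k hk => ?_
    have hks : k ∉ s := by simpa using hk
    have hjk : j ≠ k := fun h => hks (h ▸ hj)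
    rw [erase_insert_of_ne hjk.symm, ← add_mul, sign_cancel' hj hks, zero_mul]
  have hD : (∑ j ∈ s, pderiv j (X j * ω s)) + (∑ k ∈ sᶜ, X k * pderiv k (ω s)) = n • ω s := by
    have h1 : ∀ j ∈ s, pderiv j (X j * ω s) = ω s + X j * pderiv j (ω s) := fun j _ => by
      rw [pderiv_mul, pderiv_X_self, one_mul]
    rw [sum_congr rfl h1, sum_add_distrib, sum_const, add_assoc, sum_add_sum_compl,
      euler (n - i) (ω s) (hhom s)]
    by_cases hs : s.card = i
    · rw [hs, ← add_smul, Nat.add_sub_cancel' hi]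
    · rw [hcard s hs]; simp
  rw [hA, hB, add_add_add_comm, hC, add_zero, hD]

lemma homog_spec₁ {m n i : ℕ} {ω : Omega m ℤ} (h : ω ∈ homog m n i ℤ) (t : Finset (Fin m)) :
    (ω t).IsHomogeneous (n - i) := by
  have := Submodule.mem_pi.mp h t (Set.mem_univ t)
  split_ifs at this with hc
  · exact this
  · rw [(Submodule.mem_bot ℤ).mp this]; exact isHomogeneous_zero _ _ _

lemma homog_spec₂ {m n i : ℕ} {ω : Omega m ℤ} (h : ω ∈ homog m n i ℤ) (t : Finset (Fin m))
    (ht : ¬(t.card = i ∧ i ≤ n)) : ω t = 0 := by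
  have := Submodule.mem_pi.mp h t (Set.mem_univ t)
  rw [if_neg ht] at this
  exact (Submodule.mem_bot ℤ).mp this

lemma koszul_mem {m n i : ℕ} {ω : Omega m ℤ} (hω : ω ∈ homog m n (i+1) ℤ) :
    koszul m ℤ ω ∈ homog m n i ℤ := by
  refine Submodule.mem_pi.mpr fun s _ => ?_
  rw [koszul_apply]
  split_ifs with hc
  · refine Submodule.sum_mem _ fun k hk => ?_
    have hks : k ∉ s := by simpa using hk
    by_cases hin : i + 1 ≤ n
    · have h1 : (ω (insert k s)).IsHomogeneous (n - (i+1)) := homog_spec₁ hω _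
      have h2 : ((-1 : MvPolynomial (Fin m) ℤ) ^ ((s.filter (· < k)).card)).IsHomogeneous 0 := by
        have : ((-1 : MvPolynomial (Fin m) ℤ) ^ ((s.filter (· < k)).card))
            = C ((-1:ℤ) ^ ((s.filter (· < k)).card)) := by simp
        rw [this]; exact isHomogeneous_C _ _
      have h3 := h2.mul ((isHomogeneous_X ℤ k).mul h1)
      have : 0 + (1 + (n - (i+1))) = n - i := by omega
      rwa [this] at h3
    · have : ω (insert k s) = 0 := homog_spec₂ hω _ (by tauto)
      rw [this, mul_zero, mul_zero]
      exact Submodule.zero_mem _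
  · refine (Submodule.mem_bot ℤ).mpr (sum_eq_zero fun k hk => ?_)
    have hks : k ∉ s := by simpa using hk
    have : ω (insert k s) = 0 := by
      refine homog_spec₂ hω _ ?_
      rw [card_insert_of_notMem hks]
      omega
    rw [this, mul_zero, mul_zero]

lemma koszul_homog_zero {m n : ℕ} {ω : Omega m ℤ} (hω : ω ∈ homog m n 0 ℤ) :
    koszul m ℤ ω = 0 := by
  funext s
  rw [koszul_apply]
  refine sum_eq_zero fun k hk => ?_
  have hks : k ∉ s := by simpa using hk
  have : ω (insert k s) = 0 := homog_spec₂ hω _ (by simp [card_insert_of_notMem hks])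
  rw [this, mul_zero, mul_zero]

lemma key {m n i : ℕ} (y : Omega m ℤ) (hy1 : y ∈ homog m n i ℤ) (hy2 : dRham m ℤ y = 0) :
    (n : ℤ) • y ∈ cobdry m n i ℤ := by
  rcases le_or_gt i n with hi | hi
  · have hsum : dRham m ℤ (koszul m ℤ y) = (n : ℤ) • y := by
      funext s
      have h := homotopy hi y (homog_spec₁ hy1) (fun t ht => homog_spec₂ hy1 t (by tauto)) s
      have h2 : koszul m ℤ (dRham m ℤ y) s = 0 := by rw [hy2, map_zero]; rfl
      rw [h2, add_zero] at h
      rw [h]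
      show (n : ℤ) • y s = n • y s
      rw [Nat.cast_smul_eq_nsmul]
    match i with
    | 0 =>
      have : koszul m ℤ y = 0 := koszul_homog_zero hy1
      rw [← hsum, this, map_zero]
      exact Submodule.zero_mem _
    | i + 1 =>
      exact Submodule.mem_map.mpr ⟨koszul m ℤ y, koszul_mem hy1, hsum⟩
  · have : y = 0 := funext fun t => homog_spec₂ hy1 t (by omega)
    rw [this, smul_zero]
    exact Submodule.zero_mem _

lemma cocycles_fg (m n i : ℕ) : (cocycles m n i ℤ).FG := by
  classical
  set P : Submodule ℤ (Omega m ℤ) :=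
    Submodule.pi Set.univ fun _ : Finset (Fin m) => restrictTotalDegree (Fin m) ℤ n with hP
  have hPfg : P.FG := Submodule.fg_pi fun _ => Module.Finite.iff_fg.mp inferInstance
  have hle : cocycles m n i ℤ ≤ P := by
    refine le_trans inf_le_left ?_
    intro ω hω
    refine Submodule.mem_pi.mpr fun s _ => ?_
    rw [mem_restrictTotalDegree]
    exact le_trans (homog_spec₁ hω s).totalDegree_le (Nat.sub_le n i)
  haveI : IsNoetherian ℤ P := isNoetherian_of_fg_of_noetherian _ hPfg
  have h1 : (Submodule.comap P.subtype (cocycles m n i ℤ)).FG := IsNoetherian.noetherian _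
  have h2 := h1.map P.subtype
  rwa [Submodule.map_comap_subtype, inf_eq_right.mpr hle] at h2

/-- for `n ≥ 1` the de Rham cohomology groups of `ℤ[x₁,…,x_m]` in total
degree `n` are finite. -/
theorem deRham_cohomology_finite (m n i : ℕ) (hn : 1 ≤ n) : Finite (DRH m n i ℤ) := by
  haveI : Module.Finite ℤ (cocycles m n i ℤ) := Module.Finite.iff_fg.mpr (cocycles_fg m n i)
  haveI : Module.Finite ℤ (DRH m n i ℤ) := Module.Finite.quotient ℤ _
  apply Module.finite_of_fg_torsion
  intro x
  obtain ⟨y, rfl⟩ := Submodule.Quotient.mk_surjective _ x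
  refine ⟨⟨(n : ℤ), mem_nonZeroDivisors_of_ne_zero (Int.natCast_ne_zero.mpr (by omega))⟩, ?_⟩
  rw [Submonoid.smul_def, ← Submodule.Quotient.mk_smul, Submodule.Quotient.mk_eq_zero]
  rw [Submodule.mem_comap]
  show ((n : ℤ) • y : cocycles m n i ℤ).val ∈ cobdry m n i ℤ
  rw [Submodule.coe_smul]
  exact key _ y.2.1 (LinearMap.mem_ker.mp y.2.2)
end

section
/- Let p be a prime. If ω ∈ Ω^i_n is a de Rham cocycle (dω = 0) of total degree n ≥ 1 in ℤ[x₁,…,x_m], then F(nω)/(np) is a well-defined cocycle in Ω^i_{np}; in particular the image of the Frobenius F_* on cohomology in positive total degree n is contained in p·H^i(Ω^⋆_{np}). -/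
open MvPolynomial

section Aux

lemma coeff_pderiv' {σ R : Type*} [CommSemiring R] [DecidableEq σ] (j : σ)
    (f : MvPolynomial σ R) (e : σ →₀ ℕ) :
    coeff e (pderiv j f) = (e j + 1 : ℕ) • coeff (e + Finsupp.single j 1) f := by
  induction f using MvPolynomial.induction_on' with
  | add f g hf hg => simp [hf, hg]
  | monomial s a =>
    rw [pderiv_monomial, coeff_monomial, coeff_monomial]
    by_cases hs : s = e + Finsupp.single j 1
    · subst hs
      rw [if_pos (add_tsub_cancel_right _ _), if_pos rfl]
      simp [mul_comm, nsmul_eq_mul]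
    · rw [if_neg hs, smul_zero]
      by_cases h : s - Finsupp.single j 1 = e
      · rw [if_pos h]
        by_cases hsj : s j = 0
        · simp [hsj]
        · exfalso
          apply hs
          rw [← h, tsub_add_cancel_of_le]
          rwa [Finsupp.single_le_iff, Nat.one_le_iff_ne_zero]
      · rw [if_neg h]

lemma homog_pderiv_zero {m n : ℕ} (hn : 1 ≤ n) (f : MvPolynomial (Fin m) ℤ)
    (hf : f.IsHomogeneous n) (hd : ∀ j, pderiv j f = 0) : f = 0 := by
  ext d
  rw [coeff_zero]
  by_cases h : d.degree = n
  · have hd0 : d ≠ 0 := by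
      rintro rfl
      simp [map_zero] at h
      omega
    obtain ⟨j, hj⟩ : ∃ j, d j ≠ 0 := by
      by_contra hc
      push_neg at hc
      exact hd0 (Finsupp.ext hc)
    have h1 : Finsupp.single j 1 ≤ d := by
      rwa [Finsupp.single_le_iff, Nat.one_le_iff_ne_zero]
    have := coeff_pderiv' j f (d - Finsupp.single j 1)
    rw [hd j, coeff_zero, tsub_add_cancel_of_le h1] at this
    rw [nsmul_eq_mul] at this
    have := (mul_eq_zero.mp this.symm).resolve_left (by positivity)
    exact this
  · exact hf.coeff_eq_zero h

lemma pderiv_bind_pow {σ R : Type*} [CommSemiring R] [DecidableEq σ] (p : ℕ) (j : σ)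
    (f : MvPolynomial σ R) :
    pderiv j (bind₁ (fun k => (X k : MvPolynomial σ R) ^ p) f)
      = (p : MvPolynomial σ R) * X j ^ (p - 1)
        * bind₁ (fun k => (X k : MvPolynomial σ R) ^ p) (pderiv j f) := by
  induction f using MvPolynomial.induction_on with
  | C a => simp
  | add f g hf hg => simp only [map_add, hf, hg]; ring
  | mul_X f k hf =>
    by_cases hk : k = j
    · subst hk
      simp only [map_add, map_mul, pderiv_mul, hf, bind₁_X_right, pderiv_pow, pderiv_X_self, mul_one,
        map_one]
      ring
    · simp only [map_mul, pderiv_mul, hf, bind₁_X_right, pderiv_pow, pderiv_X_of_ne hk, mul_zero,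
        map_add, map_zero, add_zero, zero_mul]
      ring

lemma pderiv_prod_zero {σ R : Type*} [CommSemiring R] (p : ℕ) (j : σ) (t : Finset σ)
    (hj : j ∉ t) :
    pderiv j (∏ k ∈ t, ((p : MvPolynomial σ R) * X k ^ (p - 1))) = 0 := by
  classical
  induction t using Finset.cons_induction with
  | empty => simp
  | cons k t hk ih =>
    simp only [Finset.mem_cons, not_or] at hj
    rw [Finset.prod_cons, pderiv_mul, ih hj.2, mul_zero, add_zero, pderiv_mul, pderiv_pow,
      pderiv_X_of_ne (Ne.symm hj.1)]
    have : pderiv j ((p : MvPolynomial σ R)) = 0 := by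
      rw [show ((p : MvPolynomial σ R)) = C (p:R) from rfl]; simp
    simp [this]

lemma dRham_frob (m p : ℕ) (ω : Omega m ℤ) :
    dRham m ℤ (frob m p ℤ ω) = frob m p ℤ (dRham m ℤ ω) := by
  classical
  funext s
  simp only [dRham, frob, LinearMap.coe_mk, AddHom.coe_mk, map_sum, map_mul, map_pow, map_neg,
    map_one, Finset.mul_sum]
  refine Finset.sum_congr rfl fun j hj => ?_
  rw [pderiv_mul, pderiv_prod_zero p j _ (Finset.notMem_erase j s), zero_mul, zero_add,
    pderiv_bind_pow]
  rw [← Finset.prod_erase_mul s _ hj]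
  ring

end Aux

/-- for a cocycle `ω` of total degree `n ≥ 1`, `F(nω)/(np)` is a
well-defined cocycle `η` of total degree `pn`, and `F(ω)` is cohomologous to `p·η`;
in particular the image of `F⁎` on cohomology is divisible by `p`. -/
theorem frobenius_image_divisible (m n i p : ℕ) (hp : p.Prime) (hn : 1 ≤ n)
    (ω : Omega m ℤ) (hω : ω ∈ cocycles m n i ℤ) :
    ∃ η ∈ cocycles m (p * n) i ℤ,
      ((n : ℤ) * p) • η = (n : ℤ) • frob m p ℤ ω ∧
      frob m p ℤ ω - (p : ℤ) • η ∈ cobdry m (p * n) i ℤ := by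
  classical
  have hp1 : 1 ≤ p := hp.pos
  obtain ⟨hhom, hker⟩ := hω
  replace hker : dRham m ℤ ω = 0 := hker
  replace hhom : ω ∈ homog m n i ℤ := hhom
  have hωs : ∀ s : Finset (Fin m),
      ω s ∈ (if s.card = i ∧ i ≤ n then homogeneousSubmodule (Fin m) ℤ (n - i) else ⊥) :=
    fun s => (Submodule.mem_pi.mp hhom) s (Set.mem_univ s)
  have hω0 : ω ∅ = 0 := by
    by_cases hi : i = 0
    · subst hi
      have h1 := hωs ∅
      rw [if_pos ⟨Finset.card_empty, Nat.zero_le n⟩] at h1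
      refine homog_pderiv_zero hn _ ?_ ?_
      · have := (mem_homogeneousSubmodule _ _).mp h1
        simpa using this
      · intro j
        have h2 := congrFun hker {j}
        simp only [dRham, LinearMap.coe_mk, AddHom.coe_mk, Finset.sum_singleton,
          Finset.erase_singleton, Pi.zero_apply] at h2
        simpa using h2
    · have h1 := hωs ∅
      rw [if_neg (by rintro ⟨h2, -⟩; exact hi (by simpa using h2.symm))] at h1
      simpa using h1
  set B : Finset (Fin m) → MvPolynomial (Fin m) ℤ :=
    fun s => bind₁ (fun k => (X k : MvPolynomial (Fin m) ℤ) ^ p) (ω s) with hB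
  set η : Omega m ℤ :=
    fun s => C ((p : ℤ) ^ (s.card - 1)) * ((∏ k ∈ s, (X k : MvPolynomial (Fin m) ℤ) ^ (p - 1)) * B s)
    with hη
  have hkey : (p : ℤ) • η = frob m p ℤ ω := by
    funext s
    rcases Finset.eq_empty_or_nonempty s with rfl | hs
    · simp [hη, hB, frob, hω0]
    · have hc : 1 ≤ s.card := Finset.card_pos.mpr hs
      simp only [Pi.smul_apply, hη, frob, LinearMap.coe_mk, AddHom.coe_mk, hB]
      rw [smul_eq_C_mul, Finset.prod_mul_distrib, Finset.prod_const,
        show ((p : MvPolynomial (Fin m) ℤ)) = C (p : ℤ) from rfl, ← C_pow, ← mul_assoc, ← C_mul,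
        ← pow_succ', Nat.sub_add_cancel hc, mul_assoc]
  refine ⟨η, ⟨?_, ?_⟩, ?_, ?_⟩
  · -- homogeneity
    refine Submodule.mem_pi.mpr fun s _ => ?_
    by_cases hcond : s.card = i ∧ i ≤ p * n
    · rw [if_pos hcond]
      by_cases hin : i ≤ n
      · have h1 := hωs s
        rw [if_pos ⟨hcond.1, hin⟩] at h1
        have hb : (B s).IsHomogeneous (p * (n - i)) := by
          have := ((mem_homogeneousSubmodule _ _).mp h1).aeval
            (fun k => (X k : MvPolynomial (Fin m) ℤ) ^ p) (fun k => isHomogeneous_X_pow k p)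
          exact this
        have hpr : (∏ k ∈ s, (X k : MvPolynomial (Fin m) ℤ) ^ (p - 1)).IsHomogeneous
            ((p - 1) * i) := by
          have := IsHomogeneous.prod s (fun k => (X k : MvPolynomial (Fin m) ℤ) ^ (p - 1))
            (fun _ => p - 1) (fun k _ => isHomogeneous_X_pow k (p - 1))
          rwa [Finset.sum_const, smul_eq_mul, hcond.1, mul_comm] at this
        have hfin := (hpr.mul hb).C_mul ((p : ℤ) ^ (s.card - 1))
        have hdeg : (p - 1) * i + p * (n - i) = p * n - i := by
          have h2 : i ≤ p * n := hcond.2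
          zify [hin, hp1, h2]
          ring
        rw [hdeg] at hfin
        exact (mem_homogeneousSubmodule _ _).mpr hfin
      · have hz : ω s = 0 := by
          have h1 := hωs s
          rw [if_neg (fun h => hin h.2)] at h1
          simpa using h1
        simp only [hη, hB, hz, map_zero, mul_zero]
        exact Submodule.zero_mem _
    · rw [if_neg hcond]
      have hz : ω s = 0 := by
        have h1 := hωs s
        rw [if_neg (fun ⟨h2, h3⟩ =>
          hcond ⟨h2, h3.trans (Nat.le_mul_of_pos_left n hp.pos)⟩)] at h1
        simpa using h1
      simp [hη, hB, hz]
  · -- cocycle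
    show dRham m ℤ η = 0
    have h0 : (p : ℤ) • dRham m ℤ η = 0 := by
      rw [← map_smul, hkey, dRham_frob, hker, map_zero]
    funext s
    have h1 := congrFun h0 s
    rw [Pi.smul_apply, Pi.zero_apply, smul_eq_C_mul] at h1
    rcases mul_eq_zero.mp h1 with h | h
    · exact absurd h (by simp [C_eq_zero, hp.ne_zero])
    · exact h
  · rw [mul_smul, hkey]
  · rw [hkey, sub_self]
    exact Submodule.zero_mem _
end

section
/- Let p be a prime. The inverse Cartier map C^{-1}: Ω^i_n ⊗ 𝔽_p → H^i(Ω^⋆_{pn} ⊗ 𝔽_p) for the polynomial ring 𝔽_p[x₁,…,x_m] is an isomorphism of 𝔽_p-vector spaces for all i and n. -/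
open MvPolynomial

namespace Cart

open Finset MvPolynomial

variable {m p : ℕ}

/-- sign as a scalar -/
def sgr (s : Finset (Fin m)) (j : Fin m) (p : ℕ) : ZMod p :=
  (-1) ^ ((s.filter (· < j)).card)

lemma sg_C (e : ℕ) :
    ((-1 : MvPolynomial (Fin m) (ZMod p)) ^ e) = C ((-1 : ZMod p) ^ e) := by
  rw [map_pow, map_neg, map_one]

lemma dRham_apply (ω : Omega m (ZMod p)) (s : Finset (Fin m)) :
    dRham m (ZMod p) ω s = ∑ j ∈ s, C (sgr s j p) * pderiv j (ω (s.erase j)) := by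
  show ∑ j ∈ s, _ * _ = _
  refine Finset.sum_congr rfl fun j _ => ?_
  rw [sg_C]; rfl

lemma card_filter_insert {s : Finset (Fin m)} {j : Fin m} (h : j ∉ s) (k : Fin m) :
    ((insert j s).filter (· < k)).card
      = (s.filter (· < k)).card + (if j < k then 1 else 0) := by
  rw [Finset.filter_insert]
  split_ifs with hj
  · rw [Finset.card_insert_of_notMem (fun hc => h (Finset.mem_of_mem_filter _ hc))]
  · rw [add_zero]

lemma card_filter_erase {s : Finset (Fin m)} {j : Fin m} (h : j ∈ s) (k : Fin m) :
    (s.filter (· < k)).card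
      = ((s.erase j).filter (· < k)).card + (if j < k then 1 else 0) := by
  conv_lhs => rw [← Finset.insert_erase h]
  exact card_filter_insert (Finset.notMem_erase _ _) k

lemma sgr_insert_self {s : Finset (Fin m)} {j : Fin m} (h : j ∉ s) :
    sgr (insert j s) j p = sgr s j p := by
  unfold sgr
  rw [card_filter_insert h j, if_neg (lt_irrefl j), add_zero]

lemma sgr_erase_self {s : Finset (Fin m)} {j : Fin m} (h : j ∈ s) :
    sgr (s.erase j) j p = sgr s j p := by
  unfold sgr
  rw [card_filter_erase h j, if_neg (lt_irrefl j), add_zero]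

lemma sgr_sq (s : Finset (Fin m)) (j : Fin m) : sgr s j p * sgr s j p = 1 := by
  unfold sgr
  rw [← pow_add, ← two_mul, pow_mul, neg_one_sq, one_pow]

/-- antisymmetry used in `d ∘ d = 0`. -/
lemma sgr_antisym_erase {s : Finset (Fin m)} {j k : Fin m}
    (hj : j ∈ s) (hk : k ∈ s) (hjk : j ≠ k) :
    sgr s j p * sgr (s.erase j) k p = -(sgr s k p * sgr (s.erase k) j p) := by
  have h1 := card_filter_erase hj k
  have h2 := card_filter_erase hk j
  unfold sgr
  rw [← pow_add, ← pow_add, ← neg_one_mul ((-1 : ZMod p) ^ _), ← pow_succ', h1, h2]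
  rcases hjk.lt_or_gt with h | h
  · rw [if_pos h, if_neg (asymm h)]
    ring
  · rw [if_neg (asymm h), if_pos h]
    ring

/-- antisymmetry used in `d κ + κ d = Θ`. -/
lemma sgr_antisym_insert {s : Finset (Fin m)} {j k : Fin m}
    (hj : j ∉ s) (hk : k ∈ s) :
    sgr s j p * sgr (insert j s) k p = -(sgr s k p * sgr (s.erase k) j p) := by
  have hjk : j ≠ k := fun h => hj (h ▸ hk)
  have h1 := card_filter_insert hj k
  have h2 := card_filter_erase hk j
  unfold sgr
  rw [← pow_add, ← pow_add, ← neg_one_mul ((-1 : ZMod p) ^ _), ← pow_succ', h1, h2]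
  rcases hjk.lt_or_gt with h | h
  · rw [if_pos h, if_neg (asymm h)]
    ring
  · rw [if_neg (asymm h), if_pos h]
    ring

end Cart
namespace Cart

open Finset MvPolynomial

variable {m p : ℕ}

lemma pderiv_pderiv_comm (j k : Fin m) (Q : MvPolynomial (Fin m) (ZMod p)) :
    pderiv j (pderiv k Q) = pderiv j (pderiv k Q) := rfl

lemma pderiv_comm' (j k : Fin m) (Q : MvPolynomial (Fin m) (ZMod p)) :
    pderiv j (pderiv k Q) = pderiv k (pderiv j Q) := by
  rcases eq_or_ne j k with rfl | hjk
  · rfl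
  · induction Q using MvPolynomial.induction_on' with
    | add f g hf hg => simp only [map_add, hf, hg]
    | monomial a c =>
        simp only [pderiv_monomial]
        rw [tsub_right_comm]
        congr 1
        · rw [Finsupp.tsub_apply, Finsupp.tsub_apply, Finsupp.single_apply,
            Finsupp.single_apply, if_neg hjk, if_neg (Ne.symm hjk), Nat.sub_zero, Nat.sub_zero]
          ring
  
lemma d_d (ω : Omega m (ZMod p)) :
    dRham m (ZMod p) (dRham m (ZMod p) ω) = 0 := by
  funext s
  rw [dRham_apply]
  have step : ∀ j ∈ s, C (sgr s j p) * pderiv j (dRham m (ZMod p) ω (s.erase j))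
      = ∑ k ∈ s, (if j = k then 0 else
          C (sgr s j p * sgr (s.erase j) k p) *
            pderiv j (pderiv k (ω ((s.erase j).erase k)))) := by
    intro j hj
    rw [dRham_apply, map_sum, Finset.mul_sum]
    rw [← Finset.sum_erase s (f := fun k => if j = k then 0 else
          C (sgr s j p * sgr (s.erase j) k p) *
            pderiv j (pderiv k (ω ((s.erase j).erase k)))) (if_pos rfl)]
    refine Finset.sum_congr rfl fun k hk => ?_
    rw [if_neg (fun h => (Finset.ne_of_mem_erase hk) h.symm)]
    rw [pderiv_C_mul, C_mul, mul_assoc]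
  rw [Finset.sum_congr rfl step, ← Finset.sum_product']
  refine Finset.sum_involution (fun a _ => a.swap) ?_ ?_ ?_ ?_
  · rintro ⟨j, k⟩ ha
    rw [Finset.mem_product] at ha
    rcases eq_or_ne j k with rfl | hjk
    · simp
    · simp only [Prod.swap]
      rw [if_neg hjk, if_neg (Ne.symm hjk)]
      rw [sgr_antisym_erase ha.1 ha.2 hjk, pderiv_comm', Finset.erase_right_comm,
        map_neg, neg_mul, neg_add_cancel]
  · rintro ⟨j, k⟩ ha hne
    rcases eq_or_ne j k with rfl | hjk
    · simp at hne
    · simp only [Prod.swap, ne_eq, Prod.mk.injEq, not_and]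
      intro h; exact absurd h.symm hjk
  · rintro ⟨j, k⟩ ha
    rw [Finset.mem_product] at ha ⊢
    exact ⟨ha.2, ha.1⟩
  · rintro ⟨j, k⟩ _
    rfl

/-- per-variable Koszul contraction, with `C`-normalized sign -/
noncomputable def Kap (m p : ℕ) (j : Fin m) : Module.End (ZMod p) (Omega m (ZMod p)) where
  toFun ω s := if j ∈ s then 0 else C (sgr s j p) * (X j * ω (insert j s))
  map_add' ω η := by
    funext s
    by_cases h : j ∈ s <;> simp [h, mul_add]
  map_smul' c ω := by
    funext s
    by_cases h : j ∈ s <;> simp [h, mul_smul_comm]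

/-- the diagonal operator `X j ∂_j + [j ∈ s]` -/
noncomputable def Th (m p : ℕ) (j : Fin m) : Module.End (ZMod p) (Omega m (ZMod p)) where
  toFun ω s := X j * pderiv j (ω s) + (if j ∈ s then ω s else 0)
  map_add' ω η := by
    funext s
    by_cases h : j ∈ s <;> simp [h, mul_add] <;> ring
  map_smul' c ω := by
    funext s
    by_cases h : j ∈ s <;> simp [h, mul_smul_comm]

lemma Kap_apply (j : Fin m) (ω : Omega m (ZMod p)) (s : Finset (Fin m)) :
    Kap m p j ω s = if j ∈ s then 0 else C (sgr s j p) * (X j * ω (insert j s)) := rfl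

lemma Th_apply (j : Fin m) (ω : Omega m (ZMod p)) (s : Finset (Fin m)) :
    Th m p j ω s = X j * pderiv j (ω s) + (if j ∈ s then ω s else 0) := rfl

set_option maxHeartbeats 1000000 in
lemma dK_Kd (j : Fin m) (ω : Omega m (ZMod p)) :
    dRham m (ZMod p) (Kap m p j ω) + Kap m p j (dRham m (ZMod p) ω) = Th m p j ω := by
  funext s
  show dRham m (ZMod p) (Kap m p j ω) s + Kap m p j (dRham m (ZMod p) ω) s = _
  rw [Th_apply]
  by_cases hj : j ∈ s
  · rw [Kap_apply, if_pos hj, add_zero, dRham_apply]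
    rw [Finset.sum_eq_single_of_mem j hj (fun k hk hkj => by
      rw [Kap_apply, if_pos (Finset.mem_erase.mpr ⟨Ne.symm hkj, hj⟩), map_zero, mul_zero])]
    rw [Kap_apply, if_neg (Finset.notMem_erase _ _), Finset.insert_erase hj,
      pderiv_C_mul, sgr_erase_self hj, pderiv_mul, pderiv_X_self, one_mul,
      ← mul_assoc, ← C_mul, sgr_sq, C_1, one_mul, if_pos hj]
    ring
  · rw [if_neg hj, add_zero]
    have hDK : dRham m (ZMod p) (Kap m p j ω) s
        = ∑ k ∈ s, C (sgr s k p * sgr (s.erase k) j p) *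
            (X j * pderiv k (ω ((insert j s).erase k))) := by
      rw [dRham_apply]
      refine Finset.sum_congr rfl fun k hk => ?_
      have hkj : j ≠ k := fun h => hj (h ▸ hk)
      rw [Kap_apply, if_neg (fun hc => hj (Finset.mem_of_mem_erase hc)),
        Finset.erase_insert_of_ne hkj, pderiv_C_mul, pderiv_mul, pderiv_X_of_ne hkj,
        zero_mul, zero_add, C_mul, mul_assoc]
    have hKD : Kap m p j (dRham m (ZMod p) ω) s
        = X j * pderiv j (ω s) + ∑ k ∈ s, C (sgr s j p * sgr (insert j s) k p) *
            (X j * pderiv k (ω ((insert j s).erase k))) := by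
      rw [Kap_apply, if_neg hj, dRham_apply, Finset.sum_insert hj, Finset.erase_insert hj,
        sgr_insert_self hj]
      rw [mul_add, Finset.mul_sum, mul_add, Finset.mul_sum]
      congr 1
      · rw [← mul_assoc, mul_comm (C (sgr s j p)) (X j), mul_assoc, ← mul_assoc (C (sgr s j p)),
          ← C_mul, sgr_sq, C_1, one_mul]
      · refine Finset.sum_congr rfl fun k hk => ?_
        rw [C_mul]
        ring
    rw [hDK, hKD, ← add_assoc, add_comm _ (X j * pderiv j (ω s)), add_assoc]
    conv_rhs => rw [← add_zero (X j * pderiv j (ω s))]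
    congr 1
    rw [← Finset.sum_add_distrib]
    refine Finset.sum_eq_zero fun k hk => ?_
    rw [sgr_antisym_insert hj hk, map_neg, neg_mul, add_neg_cancel]

end Cart
namespace Cart

open Finset MvPolynomial

variable {m p : ℕ}

def dvec (s : Finset (Fin m)) (b : Fin m →₀ ℕ) (j : Fin m) : ℕ :=
  b j + (if j ∈ s then 1 else 0)

/-- a diagonal operator with multiplier `μ` -/
def Diag (F : Module.End (ZMod p) (Omega m (ZMod p)))
    (μ : Finset (Fin m) → (Fin m →₀ ℕ) → ZMod p) : Prop :=
  ∀ ω s b, coeff b (F ω s) = μ s b * coeff b (ω s)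

lemma Diag.one : Diag (1 : Module.End (ZMod p) (Omega m (ZMod p))) (fun _ _ => 1) :=
  fun _ _ _ => (one_mul _).symm

lemma Diag.mul {F G : Module.End (ZMod p) (Omega m (ZMod p))} {μ ν}
    (hF : Diag F μ) (hG : Diag G ν) :
    Diag (F * G) (fun s b => μ s b * ν s b) := by
  intro ω s b
  rw [Module.End.mul_apply, hF, hG, mul_assoc]

lemma Diag.pow {F : Module.End (ZMod p) (Omega m (ZMod p))} {μ}
    (hF : Diag F μ) (k : ℕ) : Diag (F ^ k) (fun s b => μ s b ^ k) := by
  induction k with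
  | zero => simpa using Diag.one
  | succ k ih =>
      intro ω s b
      show coeff b ((F ^ (k+1)) ω s) = μ s b ^ (k+1) * coeff b (ω s)
      rw [pow_succ, pow_succ]
      exact (ih.mul hF) ω s b

lemma Diag.one_sub {F : Module.End (ZMod p) (Omega m (ZMod p))} {μ}
    (hF : Diag F μ) : Diag (1 - F) (fun s b => 1 - μ s b) := by
  intro ω s b
  rw [LinearMap.sub_apply, Module.End.one_apply]
  have : (ω - F ω) s = ω s - F ω s := rfl
  rw [this, coeff_sub, hF, sub_mul, one_mul]

lemma Diag.list_prod {ι : Type*} (l : List ι)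
    (F : ι → Module.End (ZMod p) (Omega m (ZMod p)))
    (μ : ι → Finset (Fin m) → (Fin m →₀ ℕ) → ZMod p)
    (h : ∀ j, Diag (F j) (μ j)) :
    Diag ((l.map F).prod) (fun s b => (l.map fun j => μ j s b).prod) := by
  induction l with
  | nil => simpa using Diag.one
  | cons j l ih =>
      intro ω s b
      show coeff b (((List.map F (j :: l)).prod) ω s)
          = (List.map (fun k => μ k s b) (j :: l)).prod * coeff b (ω s)
      rw [List.map_cons, List.prod_cons, List.map_cons, List.prod_cons]
      exact ((h j).mul ih) ω s b

lemma coeff_X_pderiv (j : Fin m) (Q : MvPolynomial (Fin m) (ZMod p)) (b : Fin m →₀ ℕ) :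
    coeff b (X j * pderiv j Q) = (b j : ZMod p) * coeff b Q := by
  induction Q using MvPolynomial.induction_on' with
  | add f g hf hg => rw [map_add, mul_add, coeff_add, hf, hg, coeff_add, mul_add]
  | monomial a c =>
      rw [pderiv_monomial]
      by_cases haj : a j = 0
      · rw [haj, Nat.cast_zero, mul_zero, monomial_zero, mul_zero, coeff_zero, coeff_monomial]
        split_ifs with hab
        · subst hab; rw [haj, Nat.cast_zero, zero_mul]
        · rw [mul_zero]
      · rw [show (X j : MvPolynomial (Fin m) (ZMod p)) = monomial (Finsupp.single j 1) 1 from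
          by rw [← C_mul_X_eq_monomial, map_one, one_mul], monomial_mul, one_mul]
        have hle : Finsupp.single j 1 ≤ a := Finsupp.single_le_iff.mpr (Nat.one_le_iff_ne_zero.mpr haj)
        rw [add_comm, tsub_add_cancel_of_le hle]
        rw [coeff_monomial, coeff_monomial]
        split_ifs with hab
        · subst hab; ring
        · rw [mul_zero]

lemma diag_Th (j : Fin m) :
    Diag (Th m p j) (fun s b => (dvec s b j : ZMod p)) := by
  intro ω s b
  rw [Th_apply, coeff_add, coeff_X_pderiv]
  unfold dvec
  by_cases hs : j ∈ s
  · simp [hs]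
    push_cast
    ring
  · simp [hs]

noncomputable def nuOp (m p : ℕ) (j : Fin m) : Module.End (ZMod p) (Omega m (ZMod p)) :=
  1 - (Th m p j) ^ (p - 1)

noncomputable def PiOp (m p : ℕ) : Module.End (ZMod p) (Omega m (ZMod p)) :=
  ((List.finRange m).map (nuOp m p)).prod

lemma diag_nu (hp : p.Prime) (j : Fin m) :
    Diag (nuOp m p j) (fun s b => if p ∣ dvec s b j then 1 else 0) := by
  haveI := Fact.mk hp
  intro ω s b
  rw [show nuOp m p j = 1 - Th m p j ^ (p - 1) from rfl,
    ((diag_Th (p := p) j).pow (p-1)).one_sub ω s b]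
  beta_reduce
  congr 1
  by_cases hd : p ∣ dvec s b j
  · rw [if_pos hd, (ZMod.natCast_eq_zero_iff _ _).mpr hd,
      zero_pow (Nat.sub_ne_zero_of_lt hp.one_lt), sub_zero]
  · rw [if_neg hd, ZMod.pow_card_sub_one_eq_one
      (fun h0 => hd ((ZMod.natCast_eq_zero_iff _ _).mp h0)), sub_self]

lemma list_prod_ite (s : Finset (Fin m)) (b : Fin m →₀ ℕ) (l : List (Fin m)) :
    (l.map fun j => if p ∣ dvec s b j then (1 : ZMod p) else 0).prod
      = if (∀ j ∈ l, p ∣ dvec s b j) then 1 else 0 := by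
  induction l with
  | nil => simp
  | cons j l ih =>
      rw [List.map_cons, List.prod_cons, ih]
      by_cases hj : p ∣ dvec s b j <;> by_cases hl : ∀ k ∈ l, p ∣ dvec s b k <;>
        simp [hj, hl, List.forall_mem_cons]

lemma diag_listnu (hp : p.Prime) (l : List (Fin m)) :
    Diag ((l.map (nuOp m p)).prod)
      (fun s b => if (∀ j ∈ l, p ∣ dvec s b j) then 1 else 0) := by
  intro ω s b
  rw [Diag.list_prod l (nuOp m p) _ (diag_nu hp) ω s b]
  beta_reduce
  rw [list_prod_ite]

lemma diag_Pi (hp : p.Prime) :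
    Diag (PiOp m p) (fun s b => if (∀ j, p ∣ dvec s b j) then 1 else 0) := by
  intro ω s b
  rw [show PiOp m p = ((List.finRange m).map (nuOp m p)).prod from rfl,
    diag_listnu hp (List.finRange m) ω s b]
  beta_reduce
  congr 1
  simp
end Cart
namespace Cart

open Finset MvPolynomial

variable {m p : ℕ}

lemma Th_eq (j : Fin m) :
    Th m p j = dRham m (ZMod p) * Kap m p j + Kap m p j * dRham m (ZMod p) := by
  apply LinearMap.ext
  intro ω
  rw [LinearMap.add_apply, Module.End.mul_apply, Module.End.mul_apply]
  exact (dK_Kd j ω).symm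

lemma D_mul_D : dRham m (ZMod p) * dRham m (ZMod p) = 0 :=
  LinearMap.ext fun ω => d_d ω

lemma commute_D_Th (j : Fin m) : Commute (dRham m (ZMod p)) (Th m p j) := by
  unfold Commute SemiconjBy
  rw [Th_eq, mul_add, add_mul, ← mul_assoc, D_mul_D, zero_mul, zero_add,
    mul_assoc (Kap m p j), D_mul_D, mul_zero, add_zero, mul_assoc, ← mul_assoc]

lemma commute_D_nu (j : Fin m) : Commute (dRham m (ZMod p)) (nuOp m p j) :=
  ((Commute.one_right _).sub_right ((commute_D_Th j).pow_right _))

lemma commute_D_listnu (l : List (Fin m)) :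
    Commute (dRham m (ZMod p)) ((l.map (nuOp m p)).prod) :=
  Commute.list_prod_right _ _ fun x hx => by
    obtain ⟨j, _, rfl⟩ := List.mem_map.mp hx
    exact commute_D_nu j

lemma commute_D_Pi : Commute (dRham m (ZMod p)) (PiOp m p) :=
  commute_D_listnu _

/-- the support of diagonally-truncated forms obeys divisibility -/
lemma support_dvd_of_diag {F : Module.End (ZMod p) (Omega m (ZMod p))}
    (hF : Diag F (fun s b => if (∀ j, p ∣ dvec s b j) then 1 else 0))
    (ω : Omega m (ZMod p)) (t : Finset (Fin m)) (a : Fin m →₀ ℕ)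
    (ha : coeff a (F ω t) ≠ 0) : ∀ k, p ∣ dvec t a k := by
  by_contra h
  rw [hF ω t a] at ha
  simp only [if_neg h, zero_mul] at ha
  exact ha rfl

lemma pderiv_of_dvd_support (k : Fin m) (Q : MvPolynomial (Fin m) (ZMod p))
    (hQ : ∀ a, coeff a Q ≠ 0 → (p : ℕ) ∣ a k) : pderiv k Q = 0 := by
  conv_lhs => rw [← support_sum_monomial_coeff Q]
  rw [map_sum]
  refine Finset.sum_eq_zero fun a ha => ?_
  rw [pderiv_monomial]
  rw [(ZMod.natCast_eq_zero_iff _ _).mpr (hQ a (mem_support_iff.mp ha)), mul_zero,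
    monomial_zero]

lemma D_Pi_zero (hp : p.Prime) (ω : Omega m (ZMod p)) :
    dRham m (ZMod p) (PiOp m p ω) = 0 := by
  funext s
  rw [dRham_apply]
  refine Finset.sum_eq_zero fun j hj => ?_
  have h0 : pderiv j (PiOp m p ω (s.erase j)) = 0 := by
    refine pderiv_of_dvd_support j _ fun a ha => ?_
    have := support_dvd_of_diag (diag_Pi hp) ω (s.erase j) a ha j
    unfold dvec at this
    rwa [if_neg (Finset.notMem_erase _ _), add_zero] at this
  rw [h0, mul_zero]

lemma homog_def {N i : ℕ} (ω : Omega m (ZMod p)) :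
    ω ∈ homog m N i (ZMod p) ↔ ∀ s : Finset (Fin m),
      ω s ∈ (if s.card = i ∧ i ≤ N then
        homogeneousSubmodule (Fin m) (ZMod p) (N - i) else ⊥) := by
  constructor
  · intro h s; exact h s (Set.mem_univ s)
  · intro h s _; exact h s

lemma Diag.preserves_homog {F : Module.End (ZMod p) (Omega m (ZMod p))} {μ}
    (hF : Diag F μ) {N i : ℕ} {ω : Omega m (ZMod p)} (hω : ω ∈ homog m N i (ZMod p)) :
    F ω ∈ homog m N i (ZMod p) := by
  rw [homog_def] at hω ⊢
  intro s
  specialize hω s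
  split_ifs at hω ⊢ with hc
  · rw [mem_homogeneousSubmodule] at hω ⊢
    intro d hd
    refine hω ?_
    intro h0
    rw [hF ω s d, h0, mul_zero] at hd
    exact hd rfl
  · rw [Submodule.mem_bot] at hω ⊢
    rw [eq_zero_iff]
    intro d
    rw [hF ω s d, hω, coeff_zero, mul_zero]

lemma Kap_homog {N i : ℕ} (j : Fin m) {ω : Omega m (ZMod p)}
    (hω : ω ∈ homog m N (i + 1) (ZMod p)) :
    Kap m p j ω ∈ homog m N i (ZMod p) := by
  rw [homog_def] at hω ⊢
  intro s
  rw [Kap_apply]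
  by_cases hjs : j ∈ s
  · rw [if_pos hjs]; exact Submodule.zero_mem _
  · rw [if_neg hjs]
    specialize hω (insert j s)
    rw [Finset.card_insert_of_notMem hjs] at hω
    split_ifs with hc
    · by_cases hiN : i + 1 ≤ N
      · rw [if_pos ⟨by rw [hc.1], hiN⟩, mem_homogeneousSubmodule] at hω
        rw [mem_homogeneousSubmodule]
        have := ((isHomogeneous_C (Fin m) (sgr s j p)).mul
          ((isHomogeneous_X (ZMod p) j).mul hω))
        convert this using 1
        omega
      · have hiN' : i = N := by omega
        rw [if_neg (by omega), Submodule.mem_bot] at hω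
        rw [hω, mul_zero, mul_zero]
        exact Submodule.zero_mem _
    · rw [if_neg (by
        intro hc2
        exact hc ⟨by omega, by omega⟩), Submodule.mem_bot] at hω
      rw [hω, mul_zero, mul_zero, Submodule.mem_bot]
  
lemma Kap_homog_zero {N : ℕ} (j : Fin m) {ω : Omega m (ZMod p)}
    (hω : ω ∈ homog m N 0 (ZMod p)) : Kap m p j ω = 0 := by
  rw [homog_def] at hω
  funext s
  rw [Kap_apply]
  by_cases hjs : j ∈ s
  · rw [if_pos hjs]; rfl
  · rw [if_neg hjs]
    specialize hω (insert j s)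
    rw [if_neg (by
      rw [Finset.card_insert_of_notMem hjs]
      rintro ⟨h1, -⟩
      exact Nat.succ_ne_zero _ h1), Submodule.mem_bot] at hω
    rw [hω, mul_zero, mul_zero]
    rfl

lemma homotopy_aux (hp : p.Prime) {N i : ℕ} {ζ : Omega m (ZMod p)}
    (hζ : ζ ∈ homog m N (i + 1) (ZMod p)) (hd : dRham m (ZMod p) ζ = 0)
    (l : List (Fin m)) :
    ∃ η ∈ homog m N i (ZMod p),
      ζ - ((l.map (nuOp m p)).prod) ζ = dRham m (ZMod p) η := by
  induction l with
  | nil =>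
      refine ⟨0, Submodule.zero_mem _, ?_⟩
      rw [List.map_nil, List.prod_nil, Module.End.one_apply, sub_self, map_zero]
  | cons j l ih =>
      obtain ⟨η', hη', heq⟩ := ih
      set Q := ((l.map (nuOp m p)).prod) with hQdef
      have hDQ : dRham m (ZMod p) (Q ζ) = 0 := by
        rw [← Module.End.mul_apply, commute_D_listnu l, Module.End.mul_apply, hd, map_zero]
      have hQζ : Q ζ ∈ homog m N (i + 1) (ZMod p) :=
        (Diag.list_prod l (nuOp m p) _ (diag_nu hp)).preserves_homog hζ
      have hsucc : p - 1 = (p - 2) + 1 := by have := hp.two_le; omega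
      have hTh : (Th m p j ^ (p - 1)) (Q ζ)
          = dRham m (ZMod p) ((Th m p j ^ (p - 2)) (Kap m p j (Q ζ))) := by
        rw [hsucc, pow_succ, Module.End.mul_apply]
        have h1 : Th m p j (Q ζ) = dRham m (ZMod p) (Kap m p j (Q ζ)) := by
          rw [← dK_Kd, hDQ, map_zero, add_zero]
        rw [h1]
        have h2 := ((commute_D_Th (p := p) j).pow_right (p - 2)).symm
        calc (Th m p j ^ (p - 2)) (dRham m (ZMod p) (Kap m p j (Q ζ)))
            = (Th m p j ^ (p - 2) * dRham m (ZMod p)) (Kap m p j (Q ζ)) := rfl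
          _ = (dRham m (ZMod p) * Th m p j ^ (p - 2)) (Kap m p j (Q ζ)) := by rw [h2]
          _ = dRham m (ZMod p) ((Th m p j ^ (p - 2)) (Kap m p j (Q ζ))) := rfl
      refine ⟨η' + (Th m p j ^ (p - 2)) (Kap m p j (Q ζ)), ?_, ?_⟩
      · exact Submodule.add_mem _ hη'
          (((diag_Th j).pow (p - 2)).preserves_homog (Kap_homog j hQζ))
      · rw [List.map_cons, List.prod_cons, Module.End.mul_apply]
        have hν : (nuOp m p j) (Q ζ) = Q ζ - (Th m p j ^ (p - 1)) (Q ζ) := by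
          rw [show nuOp m p j = 1 - Th m p j ^ (p - 1) from rfl, LinearMap.sub_apply,
            Module.End.one_apply]
        rw [hν, map_add, ← heq, ← hTh]
        abel

lemma fix_zero (hp : p.Prime) {N : ℕ} {ζ : Omega m (ZMod p)}
    (hζ : ζ ∈ homog m N 0 (ZMod p)) (hd : dRham m (ZMod p) ζ = 0)
    (l : List (Fin m)) : ((l.map (nuOp m p)).prod) ζ = ζ := by
  induction l with
  | nil => rw [List.map_nil, List.prod_nil, Module.End.one_apply]
  | cons j l ih =>
      rw [List.map_cons, List.prod_cons, Module.End.mul_apply, ih]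
      have hsucc : p - 1 = (p - 2) + 1 := by have := hp.two_le; omega
      have hTh : (Th m p j ^ (p - 1)) ζ = 0 := by
        rw [hsucc, pow_succ, Module.End.mul_apply]
        have h1 : Th m p j ζ = 0 := by
          rw [← dK_Kd, hd, map_zero, add_zero, Kap_homog_zero j hζ, map_zero]
        rw [h1, map_zero]
      rw [show nuOp m p j = 1 - Th m p j ^ (p - 1) from rfl, LinearMap.sub_apply,
        Module.End.one_apply, hTh, sub_zero]

end Cart
namespace Cart

open Finset MvPolynomial

variable {m p : ℕ}

/-- exponent transform of the Cartier substitution -/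
noncomputable def psi (p : ℕ) (s : Finset (Fin m)) (b : Fin m →₀ ℕ) : Fin m →₀ ℕ :=
  Finsupp.equivFunOnFinite.symm (fun k => p * b k + (if k ∈ s then p - 1 else 0))

lemma psi_apply (s : Finset (Fin m)) (b : Fin m →₀ ℕ) (k : Fin m) :
    psi p s b k = p * b k + (if k ∈ s then p - 1 else 0) := rfl

/-- the Cartier substitution at the polynomial level -/
noncomputable def phi (m p : ℕ) (s : Finset (Fin m)) (Q : MvPolynomial (Fin m) (ZMod p)) :
    MvPolynomial (Fin m) (ZMod p) :=
  (∏ j ∈ s, (X j : MvPolynomial (Fin m) (ZMod p)) ^ (p - 1)) *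
    bind₁ (fun j => (X j : MvPolynomial (Fin m) (ZMod p)) ^ p) Q

lemma cartier_apply (ω : Omega m (ZMod p)) (s : Finset (Fin m)) :
    cartierInv m p ω s = phi m p s (ω s) := rfl

lemma monomial_eq_univ (d : Fin m →₀ ℕ) (c : ZMod p) :
    monomial d c = C c * ∏ k : Fin m, (X k : MvPolynomial (Fin m) (ZMod p)) ^ d k := by
  rw [monomial_eq, Finsupp.prod_pow]

lemma phi_monomial (s : Finset (Fin m)) (b : Fin m →₀ ℕ) (c : ZMod p) :
    phi m p s (monomial b c) = monomial (psi p s b) c := by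
  unfold phi
  rw [bind₁_monomial]
  have h1 : ∏ j ∈ b.support, ((X j : MvPolynomial (Fin m) (ZMod p)) ^ p) ^ b j
      = ∏ k : Fin m, (X k : MvPolynomial (Fin m) (ZMod p)) ^ (p * b k) := by
    rw [← Finset.prod_subset (Finset.subset_univ b.support) (fun x _ hx => by
      rw [Finsupp.notMem_support_iff.mp hx, mul_zero, pow_zero])]
    exact Finset.prod_congr rfl fun k _ => by rw [← pow_mul]
  have h2 : (∏ j ∈ s, (X j : MvPolynomial (Fin m) (ZMod p)) ^ (p - 1))
      = ∏ k : Fin m, (X k : MvPolynomial (Fin m) (ZMod p)) ^ (if k ∈ s then p - 1 else 0) := by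
    rw [← Finset.prod_subset (Finset.subset_univ s) (fun x _ hx => by
      rw [if_neg hx, pow_zero])]
    exact Finset.prod_congr rfl fun k hk => by rw [if_pos hk]
  rw [h1, h2, monomial_eq_univ, mul_left_comm, ← Finset.prod_mul_distrib]
  congr 1
  refine Finset.prod_congr rfl fun k _ => ?_
  rw [← pow_add, psi_apply, add_comm (p * b k)]

lemma psi_inj (hp : p ≠ 0) (s : Finset (Fin m)) : Function.Injective (psi p s) := by
  intro a b h
  ext k
  have := congrArg (fun f => f k) h
  simp only [psi_apply] at this
  have hpk : p * a k = p * b k := by omega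
  exact Nat.eq_of_mul_eq_mul_left (Nat.pos_of_ne_zero hp) hpk

lemma phi_sum_repr (s : Finset (Fin m)) (Q : MvPolynomial (Fin m) (ZMod p)) :
    phi m p s Q = ∑ b ∈ Q.support, monomial (psi p s b) (coeff b Q) := by
  conv_lhs => rw [← support_sum_monomial_coeff Q]
  unfold phi
  rw [map_sum, Finset.mul_sum]
  exact Finset.sum_congr rfl fun b _ => phi_monomial s b (coeff b Q)

lemma coeff_phi_psi (hp : p ≠ 0) (s : Finset (Fin m)) (Q : MvPolynomial (Fin m) (ZMod p))
    (b : Fin m →₀ ℕ) : coeff (psi p s b) (phi m p s Q) = coeff b Q := by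
  rw [phi_sum_repr, coeff_sum]
  have : ∀ a ∈ Q.support, coeff (psi p s b) (monomial (psi p s a) (coeff a Q))
      = if a = b then coeff a Q else 0 := by
    intro a _
    rw [coeff_monomial]
    congr 1
    simp only [eq_iff_iff]
    exact ⟨fun h => (psi_inj hp s h), fun h => by rw [h]⟩
  rw [Finset.sum_congr rfl this, Finset.sum_ite_eq' Q.support b (fun a => coeff a Q)]
  split_ifs with hb
  · rfl
  · exact (notMem_support_iff.mp hb).symm

lemma dvd_dvec_psi (hp : p ≠ 0) (s : Finset (Fin m)) (b : Fin m →₀ ℕ) (k : Fin m) :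
    p ∣ dvec s (psi p s b) k := by
  unfold dvec
  rw [psi_apply]
  by_cases hk : k ∈ s
  · rw [if_pos hk, if_pos hk]
    have : p - 1 + 1 = p := by omega
    rw [add_assoc, this]
    exact ⟨b k + 1, by ring⟩
  · rw [if_neg hk, if_neg hk, add_zero, add_zero]
    exact ⟨b k, rfl⟩

lemma exists_of_coeff_phi (s : Finset (Fin m)) (Q : MvPolynomial (Fin m) (ZMod p))
    (a : Fin m →₀ ℕ) (ha : coeff a (phi m p s Q) ≠ 0) :
    ∃ b, coeff b Q ≠ 0 ∧ a = psi p s b := by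
  rw [phi_sum_repr, coeff_sum] at ha
  obtain ⟨b, hb, hne⟩ := Finset.exists_ne_zero_of_sum_ne_zero ha
  refine ⟨b, mem_support_iff.mp hb, ?_⟩
  rw [coeff_monomial] at hne
  by_contra h
  rw [if_neg (fun he => h he.symm)] at hne
  exact hne rfl

lemma degree_eq_sum_univ (f : Fin m →₀ ℕ) : Finsupp.degree f = ∑ k : Fin m, f k :=
  Finset.sum_subset (Finset.subset_univ _) fun x _ hx => Finsupp.notMem_support_iff.mp hx

lemma degree_psi (hp : p ≠ 0) (s : Finset (Fin m)) (b : Fin m →₀ ℕ) :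
    Finsupp.degree (psi p s b) = p * Finsupp.degree b + (p - 1) * s.card := by
  rw [degree_eq_sum_univ, degree_eq_sum_univ]
  have : ∀ k : Fin m, psi p s b k = p * b k + (if k ∈ s then p - 1 else 0) := psi_apply s b
  rw [Finset.sum_congr rfl fun k _ => this k, Finset.sum_add_distrib, ← Finset.mul_sum]
  congr 1
  rw [Finset.sum_ite_mem, Finset.univ_inter, Finset.sum_const, smul_eq_mul, mul_comm]

/-- inverse exponent transform -/
noncomputable def unpsi (p : ℕ) (s : Finset (Fin m)) (a : Fin m →₀ ℕ) : Fin m →₀ ℕ :=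
  Finsupp.equivFunOnFinite.symm
    (fun k => (a k + (if k ∈ s then 1 else 0)) / p - (if k ∈ s then 1 else 0))

lemma unpsi_apply (s : Finset (Fin m)) (a : Fin m →₀ ℕ) (k : Fin m) :
    unpsi p s a k = (a k + (if k ∈ s then 1 else 0)) / p - (if k ∈ s then 1 else 0) := rfl

lemma psi_unpsi (hp : p ≠ 0) (s : Finset (Fin m)) (a : Fin m →₀ ℕ)
    (ha : ∀ k, p ∣ dvec s a k) : psi p s (unpsi p s a) = a := by
  ext k
  rw [psi_apply, unpsi_apply]
  have hd := ha k
  unfold dvec at hd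
  by_cases hk : k ∈ s
  · rw [if_pos hk] at hd ⊢
    rw [if_pos hk]
    obtain ⟨q, hq⟩ := hd
    have hq1 : q ≥ 1 := by
      rcases Nat.eq_zero_or_pos q with rfl | h1
      · simp at hq
      · exact h1
    have hdiv : (a k + 1) / p = q := by rw [hq, Nat.mul_div_cancel_left _ (Nat.pos_of_ne_zero hp)]
    rw [hdiv]
    obtain ⟨q', rfl⟩ : ∃ q', q = q' + 1 := ⟨q - 1, by omega⟩
    have hmul : p * (q' + 1 - 1) = p * q' := by rw [Nat.add_sub_cancel]
    rw [hmul]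
    have h2 : a k + 1 = p * q' + p := by rw [hq]; ring
    have hp1 : 1 ≤ p := Nat.pos_of_ne_zero hp
    generalize hA : p * q' = A at h2 ⊢
    omega
  · rw [if_neg hk, add_zero] at hd
    simp only [if_neg hk, add_zero, Nat.sub_zero]
    exact Nat.mul_div_cancel' hd

end Cart
namespace Cart

open Finset MvPolynomial

variable {m p : ℕ}

lemma sum_ite_one (s : Finset (Fin m)) :
    (∑ k : Fin m, (if k ∈ s then (1:ℕ) else 0)) = s.card := by
  rw [Finset.sum_ite_mem, Finset.univ_inter, Finset.sum_const, smul_eq_mul, mul_one]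

lemma arith1 (hp : 1 ≤ p) {n i : ℕ} (h : i ≤ n) :
    p * (n - i) + (p - 1) * i = p * n - i := by
  obtain ⟨k, rfl⟩ : ∃ k, n = i + k := ⟨n - i, by omega⟩
  rw [show i + k - i = k by omega, mul_add, Nat.sub_mul, one_mul]
  have h1 : i ≤ p * i := Nat.le_mul_of_pos_left i (by omega)
  generalize p * i = A at *
  generalize p * k = B at *
  omega

lemma phi_homog_mem (hpz : p ≠ 0) {d : ℕ} {s : Finset (Fin m)}
    {Q : MvPolynomial (Fin m) (ZMod p)}
    (hQ : Q ∈ homogeneousSubmodule (Fin m) (ZMod p) d) :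
    phi m p s Q ∈ homogeneousSubmodule (Fin m) (ZMod p) (p * d + (p - 1) * s.card) := by
  rw [phi_sum_repr]
  refine Submodule.sum_mem _ fun b hb => ?_
  rw [mem_homogeneousSubmodule] at hQ ⊢
  refine isHomogeneous_monomial _ ?_
  rw [degree_psi hpz]
  congr 1
  congr 1
  rw [show Finsupp.degree b = (Finsupp.weight 1) b from DFunLike.congr_fun (Finsupp.degree_eq_weight_one (R := ℕ)) b]
  exact hQ (mem_support_iff.mp hb)

lemma phi_zero (s : Finset (Fin m)) : phi m p s 0 = 0 := by
  unfold phi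
  rw [map_zero, mul_zero]

lemma cartier_homog (hp : p.Prime) {n i : ℕ} {ω : Omega m (ZMod p)}
    (hω : ω ∈ homog m n i (ZMod p)) :
    cartierInv m p ω ∈ homog m (p * n) i (ZMod p) := by
  rw [homog_def] at hω ⊢
  intro s
  rw [cartier_apply]
  specialize hω s
  split_ifs at hω with hc
  · rw [if_pos ⟨hc.1, le_trans hc.2 (Nat.le_mul_of_pos_left n hp.pos)⟩]
    have := phi_homog_mem (s := s) hp.pos.ne' hω
    rw [hc.1, arith1 hp.one_le hc.2] at this
    exact this
  · rw [Submodule.mem_bot] at hω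
    rw [hω, phi_zero]
    exact Submodule.zero_mem _

lemma Pi_cartier (hp : p.Prime) (ω : Omega m (ZMod p)) :
    PiOp m p (cartierInv m p ω) = cartierInv m p ω := by
  funext s
  apply MvPolynomial.ext
  intro a
  rw [diag_Pi hp (cartierInv m p ω) s a]
  beta_reduce
  by_cases h0 : coeff a (cartierInv m p ω s) = 0
  · rw [h0, mul_zero]
  · rw [cartier_apply] at h0
    obtain ⟨b, -, rfl⟩ := exists_of_coeff_phi s (ω s) a h0
    rw [if_pos (dvd_dvec_psi hp.pos.ne' s b), one_mul]

lemma cartier_injective (hp : p.Prime) {ω : Omega m (ZMod p)}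
    (h : cartierInv m p ω = 0) : ω = 0 := by
  funext s
  have hs : phi m p s (ω s) = 0 := by
    rw [← cartier_apply, h]
    rfl
  apply MvPolynomial.ext
  intro b
  rw [← coeff_phi_psi hp.pos.ne' s (ω s) b, hs, coeff_zero]
  rfl

lemma support_Pi_facts (hp : p.Prime) {n i : ℕ} {ζ : Omega m (ZMod p)}
    (hh : ζ ∈ homog m (p * n) i (ZMod p)) {s : Finset (Fin m)}
    (hc : s.card = i ∧ i ≤ p * n) {a : Fin m →₀ ℕ}
    (ha : a ∈ (PiOp m p ζ s).support) :
    (∀ k, p ∣ dvec s a k) ∧ i ≤ n ∧ Finsupp.degree (unpsi p s a) = n - i := by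
  have hdvd : ∀ k, p ∣ dvec s a k :=
    support_dvd_of_diag (diag_Pi hp) ζ s a (mem_support_iff.mp ha)
  have hζa : coeff a (ζ s) ≠ 0 := by
    intro h0
    have hd := diag_Pi hp ζ s a
    rw [h0, mul_zero] at hd
    exact (mem_support_iff.mp ha) hd
  have hdeg : Finsupp.degree a = p * n - i := by
    have h1 := (homog_def ζ).mp hh s
    rw [if_pos hc, mem_homogeneousSubmodule] at h1
    rw [show Finsupp.degree a = (Finsupp.weight 1) a from DFunLike.congr_fun (Finsupp.degree_eq_weight_one (R := ℕ)) a]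
    exact h1 hζa
  have hpq : ∀ k : Fin m, p * ((a k + (if k ∈ s then 1 else 0)) / p)
      = a k + (if k ∈ s then 1 else 0) := fun k => Nat.mul_div_cancel' (hdvd k)
  have hsume : (∑ k : Fin m, (if k ∈ s then (1:ℕ) else 0)) = i := by
    rw [sum_ite_one]; exact hc.1
  have hsuma : (∑ k : Fin m, a k) = p * n - i := by
    rw [← degree_eq_sum_univ]; exact hdeg
  have hsumq : p * (∑ k : Fin m, (a k + (if k ∈ s then 1 else 0)) / p) = p * n := by
    rw [Finset.mul_sum, Finset.sum_congr rfl (fun k _ => hpq k), Finset.sum_add_distrib,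
      hsuma, hsume]
    omega
  have hq : (∑ k : Fin m, (a k + (if k ∈ s then 1 else 0)) / p) = n :=
    Nat.eq_of_mul_eq_mul_left hp.pos hsumq
  have hq1 : ∀ k ∈ s, 1 ≤ (a k + (if k ∈ s then 1 else 0)) / p := by
    intro k hk
    have h2 := hpq k
    rw [if_pos hk] at h2 ⊢
    rcases Nat.eq_zero_or_pos ((a k + 1) / p) with h0 | h1
    · rw [h0, mul_zero] at h2
      omega
    · exact h1
  have hin : i ≤ n := by
    have h3 : (∑ k ∈ s, (1:ℕ)) ≤ ∑ k ∈ s, (a k + (if k ∈ s then 1 else 0)) / p :=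
      Finset.sum_le_sum hq1
    have h4 : (∑ k ∈ s, (a k + (if k ∈ s then 1 else 0)) / p)
        ≤ ∑ k : Fin m, (a k + (if k ∈ s then 1 else 0)) / p :=
      Finset.sum_le_sum_of_subset (Finset.subset_univ s)
    rw [Finset.sum_const, smul_eq_mul, mul_one, hc.1] at h3
    omega
  refine ⟨hdvd, hin, ?_⟩
  rw [degree_eq_sum_univ]
  have hle : ∀ k : Fin m, (if k ∈ s then (1:ℕ) else 0)
      ≤ (a k + (if k ∈ s then 1 else 0)) / p := by
    intro k
    by_cases hk : k ∈ s
    · simpa [hk] using hq1 k hk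
    · rw [if_neg hk]; exact Nat.zero_le _
  have hsum2 : (∑ k : Fin m, ((a k + (if k ∈ s then 1 else 0)) / p
        - (if k ∈ s then (1:ℕ) else 0))) + i = n := by
    rw [← hsume, ← Finset.sum_add_distrib,
      Finset.sum_congr rfl (fun k _ => Nat.sub_add_cancel (hle k))]
    exact hq
  have hterm : ∀ k : Fin m, unpsi p s a k
      = (a k + (if k ∈ s then 1 else 0)) / p - (if k ∈ s then (1:ℕ) else 0) :=
    fun k => rfl
  rw [Finset.sum_congr rfl (fun k _ => hterm k)]
  omega

lemma Pi_eq_zero_of_zero (hp : p.Prime) {ζ : Omega m (ZMod p)} {s : Finset (Fin m)}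
    (h : ζ s = 0) : PiOp m p ζ s = 0 := by
  apply MvPolynomial.ext
  intro a
  rw [diag_Pi hp ζ s a, h, coeff_zero, mul_zero]

end Cart

/-- the inverse Cartier map `C⁻¹ : Ωⁱ_n ⊗ 𝔽_p → Hⁱ(Ω⋆_{pn} ⊗ 𝔽_p)` is an
isomorphism: it lands in cocycles, it is injective onto cohomology (only `0` is sent
to a coboundary), and every cocycle is cohomologous to a value of `C⁻¹`. -/
theorem cartierInv_isomorphism (m n i p : ℕ) (hp : p.Prime) :
    (∀ ω ∈ homog m n i (ZMod p), cartierInv m p ω ∈ cocycles m (p * n) i (ZMod p)) ∧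
    (∀ ω ∈ homog m n i (ZMod p), cartierInv m p ω ∈ cobdry m (p * n) i (ZMod p) → ω = 0) ∧
    (∀ ζ ∈ cocycles m (p * n) i (ZMod p), ∃ ω ∈ homog m n i (ZMod p),
        cartierInv m p ω - ζ ∈ cobdry m (p * n) i (ZMod p)) := by
  refine ⟨?_, ?_, ?_⟩
  · intro ω hω
    rw [cocycles, Submodule.mem_inf]
    refine ⟨Cart.cartier_homog hp hω, LinearMap.mem_ker.mpr ?_⟩
    rw [← Cart.Pi_cartier hp ω]
    exact Cart.D_Pi_zero hp _
  · intro ω hω hco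
    cases i with
    | zero =>
        rw [show cobdry m (p * n) 0 (ZMod p) = ⊥ from rfl, Submodule.mem_bot] at hco
        exact Cart.cartier_injective hp hco
    | succ i =>
        rw [show cobdry m (p * n) (i + 1) (ZMod p)
          = (homog m (p * n) i (ZMod p)).map (dRham m (ZMod p)) from rfl] at hco
        obtain ⟨η, hη, heq⟩ := Submodule.mem_map.mp hco
        have h0 : cartierInv m p ω = 0 := by
          calc cartierInv m p ω = Cart.PiOp m p (cartierInv m p ω) :=
                (Cart.Pi_cartier hp ω).symm
            _ = Cart.PiOp m p (dRham m (ZMod p) η) := by rw [heq]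
            _ = (Cart.PiOp m p * dRham m (ZMod p)) η := rfl
            _ = (dRham m (ZMod p) * Cart.PiOp m p) η := by rw [Cart.commute_D_Pi]
            _ = dRham m (ZMod p) (Cart.PiOp m p η) := rfl
            _ = 0 := Cart.D_Pi_zero hp _
        exact Cart.cartier_injective hp h0
  · intro ζ hζ
    rw [cocycles, Submodule.mem_inf] at hζ
    obtain ⟨hh, hk0⟩ := hζ
    have hk : dRham m (ZMod p) ζ = 0 := LinearMap.mem_ker.mp hk0
    set ω : Omega m (ZMod p) := fun s =>
      if s.card = i ∧ i ≤ n then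
        ∑ a ∈ (Cart.PiOp m p ζ s).support,
          monomial (Cart.unpsi p s a) (coeff a (Cart.PiOp m p ζ s))
      else 0 with hωdef
    have hkey : cartierInv m p ω = Cart.PiOp m p ζ := by
      funext s
      rw [Cart.cartier_apply]
      by_cases hcnd : s.card = i ∧ i ≤ n
      · simp only [hωdef, if_pos hcnd]
        unfold Cart.phi
        rw [map_sum, Finset.mul_sum]
        have hterm : ∀ a ∈ (Cart.PiOp m p ζ s).support,
            (∏ j ∈ s, (X j : MvPolynomial (Fin m) (ZMod p)) ^ (p - 1)) *
              (bind₁ (fun j => (X j : MvPolynomial (Fin m) (ZMod p)) ^ p))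
                (monomial (Cart.unpsi p s a) (coeff a (Cart.PiOp m p ζ s)))
            = monomial a (coeff a (Cart.PiOp m p ζ s)) := by
          intro a ha
          have hfacts := Cart.support_Pi_facts hp hh
            ⟨hcnd.1, le_trans hcnd.2 (Nat.le_mul_of_pos_left n hp.pos)⟩ ha
          have hmono := Cart.phi_monomial (p := p) s (Cart.unpsi p s a)
            (coeff a (Cart.PiOp m p ζ s))
          unfold Cart.phi at hmono
          rw [hmono, Cart.psi_unpsi hp.pos.ne' s a hfacts.1]
        rw [Finset.sum_congr rfl hterm, support_sum_monomial_coeff]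
      · simp only [hωdef, if_neg hcnd]
        rw [Cart.phi_zero]
        by_cases hcnd2 : s.card = i ∧ i ≤ p * n
        · symm
          rw [MvPolynomial.eq_zero_iff]
          intro d
          by_contra hd
          have hfacts := Cart.support_Pi_facts hp hh hcnd2 (mem_support_iff.mpr hd)
          exact hcnd ⟨hcnd2.1, hfacts.2.1⟩
        · have hz : ζ s = 0 := by
            have := (Cart.homog_def ζ).mp hh s
            rwa [if_neg hcnd2, Submodule.mem_bot] at this
          rw [Cart.Pi_eq_zero_of_zero hp hz]
    have hωm : ω ∈ homog m n i (ZMod p) := by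
      rw [Cart.homog_def]
      intro s
      by_cases hcnd : s.card = i ∧ i ≤ n
      · simp only [hωdef, if_pos hcnd]
        refine Submodule.sum_mem _ fun a ha => ?_
        have hfacts := Cart.support_Pi_facts hp hh
          ⟨hcnd.1, le_trans hcnd.2 (Nat.le_mul_of_pos_left n hp.pos)⟩ ha
        rw [mem_homogeneousSubmodule]
        exact isHomogeneous_monomial _ hfacts.2.2
      · simp only [hωdef, if_neg hcnd]
        exact Submodule.zero_mem _
    refine ⟨ω, hωm, ?_⟩
    cases i with
    | zero =>
        have hfix : Cart.PiOp m p ζ = ζ := Cart.fix_zero hp hh hk (List.finRange m)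
        rw [hkey, hfix, sub_self]
        exact Submodule.zero_mem _
    | succ i =>
        obtain ⟨η, hη, heq⟩ := Cart.homotopy_aux hp hh hk (List.finRange m)
        rw [show cobdry m (p * n) (i + 1) (ZMod p)
          = (homog m (p * n) i (ZMod p)).map (dRham m (ZMod p)) from rfl]
        refine Submodule.mem_map.mpr ⟨-η, Submodule.neg_mem _ hη, ?_⟩
        rw [map_neg, ← heq, neg_sub, hkey]
        rfl
end
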